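/- arXiv:2101.03391 — 5 statements merged into one kernel-verified Lean document; each statement's English description precedes it below -/
import Mathlib

section
/- Let e be a probability expression in which, for every atom At(F,s,r) occurring in e, the function F is differentiable at s. Suppose the infinitesimal evaluation evalε(e) is defined and equals ρε^n for some ρ ∈ ℝ and n ∈ ℤ. Then the function x ↦ ⟦e⟧(x)/x^n tends to ρ as x tends to 0 within the punctured neighborhood {x ∈ ℝ : x ≠ 0} (where x^n denotes the integer power zpow). -/
open Filter Topology

/-- An infinitesimal number `r·ε^n` is a pair of a real coefficient and an
integer exponent. -/
abbrev Infinitesimal := ℝ × ℤ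

/-- Addition of infinitesimal numbers: keep only the lowest-order term. -/
noncomputable def iadd (x y : Infinitesimal) : Infinitesimal :=
  if x.2 = y.2 then (x.1 + y.1, x.2)
  else if x.2 < y.2 then x
  else y

/-- Subtraction of infinitesimal numbers. -/
noncomputable def isub (x y : Infinitesimal) : Infinitesimal :=
  if x.2 = y.2 then (x.1 - y.1, x.2)
  else if x.2 < y.2 then x
  else (-y.1, y.2)

/-- Multiplication of infinitesimal numbers. -/
noncomputable def imul (x y : Infinitesimal) : Infinitesimal :=
  (x.1 * y.1, x.2 + y.2)

/-- Division of infinitesimal numbers: undefined when the denominator has zero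
coefficient. -/
noncomputable def idiv (x y : Infinitesimal) : Option Infinitesimal :=
  if y.1 = 0 then none else some (x.1 / y.1, x.2 - y.2)

/-- Probability expressions: real constants, atoms `At(F,s,r)`, and the four
arithmetic operations. -/
inductive PExpr where
  | const : ℝ → PExpr
  | atom : (ℝ → ℝ) → ℝ → ℝ → PExpr
  | add : PExpr → PExpr → PExpr
  | sub : PExpr → PExpr → PExpr
  | mul : PExpr → PExpr → PExpr
  | div : PExpr → PExpr → PExpr

/-- The real interpretation of a probability expression: an atom `At(F,s,r)` at
`x` is `F (s + r*x/2) - F (s - r*x/2)`, and operations are interpreted in `ℝ`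
(with the convention `x / 0 = 0`). -/
noncomputable def PExpr.eval : PExpr → ℝ → ℝ
  | .const c, _ => c
  | .atom F s r, x => F (s + r * x / 2) - F (s - r * x / 2)
  | .add a b, x => a.eval x + b.eval x
  | .sub a b, x => a.eval x - b.eval x
  | .mul a b, x => a.eval x * b.eval x
  | .div a b, x => a.eval x / b.eval x

/-- The infinitesimal evaluation of a probability expression: a constant `c`
evaluates to `c·ε^0`, an atom `At(F,s,r)` to `(deriv F s * r)·ε^1`, and
operations are interpreted by infinitesimal arithmetic, propagating
undefinedness. -/
noncomputable def PExpr.evalE : PExpr → Option Infinitesimal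
  | .const c => some (c, 0)
  | .atom F s r => some (deriv F s * r, 1)
  | .add a b => do let x ← a.evalE; let y ← b.evalE; pure (iadd x y)
  | .sub a b => do let x ← a.evalE; let y ← b.evalE; pure (isub x y)
  | .mul a b => do let x ← a.evalE; let y ← b.evalE; pure (imul x y)
  | .div a b => do let x ← a.evalE; let y ← b.evalE; idiv x y

/-- The predicate that every atom `At(F,s,r)` occurring in the expression has
`F` differentiable at `s`. -/
def PExpr.goodAtoms : PExpr → Prop
  | .const _ => True
  | .atom F s _ => DifferentiableAt ℝ F s
  | .add a b => a.goodAtoms ∧ b.goodAtoms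
  | .sub a b => a.goodAtoms ∧ b.goodAtoms
  | .mul a b => a.goodAtoms ∧ b.goodAtoms
  | .div a b => a.goodAtoms ∧ b.goodAtoms

/-!
Read `rε^n` as the claim `f x = r x^n + o(x^n)` as `x → 0`, `x ≠ 0`. An atom satisfies it with
`n = 1` since `(F (s + r x/2) - F (s - r x/2)) / x → F' s · r`, and each infinitesimal operation
is the leading-order rule for the corresponding real operation: in a sum the term of lower order
dominates, while products and quotients multiply and divide both the coefficients and the powers
of `x`. Induction on the expression finishes the proof.
-/

def HasLeadingTerm (f : ℝ → ℝ) (p : Infinitesimal) : Prop :=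
  Tendsto (fun x => f x / x ^ p.2) (𝓝[≠] 0) (𝓝 p.1)

theorem isub_eq_iadd_neg (p : Infinitesimal) (σ : ℝ) (m : ℤ) :
    isub p (σ, m) = iadd p (-σ, m) := by
  unfold isub iadd
  split_ifs <;> simp [sub_eq_add_neg]

namespace HasLeadingTerm

variable {f g : ℝ → ℝ} {ρ σ : ℝ} {n m : ℤ}

theorem const (c : ℝ) : HasLeadingTerm (fun _ => c) (c, 0) := by
  simp [HasLeadingTerm]

theorem of_lt (hf : HasLeadingTerm f (ρ, m)) (hnm : n < m) : HasLeadingTerm f (0, n) := by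
  have hpow : Tendsto (fun x : ℝ => x ^ (m - n)) (𝓝[≠] 0) (𝓝 0) := by
    have := (continuousAt_zpow₀ (0 : ℝ) (m - n) (Or.inr (by omega))).tendsto
    rw [zero_zpow _ (by omega)] at this
    exact this.mono_left nhdsWithin_le_nhds
  refine (mul_zero ρ ▸ Tendsto.mul hf hpow).congr' ?_
  filter_upwards [self_mem_nhdsWithin] with x (hx : x ≠ 0)
  rw [zpow_sub₀ hx]
  field_simp

theorem add (hf : HasLeadingTerm f (ρ, n)) (hg : HasLeadingTerm g (σ, n)) :
    HasLeadingTerm (f + g) (ρ + σ, n) :=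
  (Tendsto.add hf hg).congr fun x => (add_div (f x) (g x) _).symm

theorem neg (hf : HasLeadingTerm f (ρ, n)) : HasLeadingTerm (-f) (-ρ, n) :=
  (Tendsto.neg hf).congr fun x => (neg_div _ (f x)).symm

theorem iadd {p q : Infinitesimal} (hf : HasLeadingTerm f p) (hg : HasLeadingTerm g q) :
    HasLeadingTerm (f + g) (iadd p q) := by
  obtain ⟨ρ, n⟩ := p
  obtain ⟨σ, m⟩ := q
  unfold _root_.iadd
  rcases lt_trichotomy n m with h | rfl | h
  · simpa [h.ne, h] using hf.add (hg.of_lt h)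
  · simpa using hf.add hg
  · simpa [h.ne', not_lt_of_gt h] using (hf.of_lt h).add hg

theorem isub {p q : Infinitesimal} (hf : HasLeadingTerm f p) (hg : HasLeadingTerm g q) :
    HasLeadingTerm (f - g) (isub p q) := by
  obtain ⟨σ, m⟩ := q
  rw [isub_eq_iadd_neg, sub_eq_add_neg]
  exact hf.iadd hg.neg

theorem imul {p q : Infinitesimal} (hf : HasLeadingTerm f p) (hg : HasLeadingTerm g q) :
    HasLeadingTerm (f * g) (imul p q) := by
  refine (Tendsto.mul hf hg).congr' ?_
  filter_upwards [self_mem_nhdsWithin] with x (hx : x ≠ 0)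
  simp only [_root_.imul, Pi.mul_apply, zpow_add₀ hx, div_mul_div_comm]

theorem idiv {p q r : Infinitesimal} (hf : HasLeadingTerm f p) (hg : HasLeadingTerm g q)
    (hr : idiv p q = some r) : HasLeadingTerm (f / g) r := by
  unfold _root_.idiv at hr
  split_ifs at hr with hq
  cases hr
  refine (Tendsto.div hf hg hq).congr' ?_
  filter_upwards [self_mem_nhdsWithin] with x (hx : x ≠ 0)
  simp only [Pi.div_apply, zpow_sub₀ hx, div_div_div_comm]

theorem atom {F : ℝ → ℝ} {s : ℝ} (hF : DifferentiableAt ℝ F s) (r : ℝ) :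
    HasLeadingTerm (fun x => F (s + r * x / 2) - F (s - r * x / 2)) (deriv F s * r, 1) := by
  have hF' : HasDerivAt F (deriv F s) s := hF.hasDerivAt
  have hlin : HasDerivAt (fun x : ℝ => r * x / 2) (r / 2) 0 := by
    simpa using ((hasDerivAt_id (0 : ℝ)).const_mul r).div_const 2
  have hplus : HasDerivAt (fun x => F (s + r * x / 2)) (deriv F s * (r / 2)) 0 :=
    hF'.comp_of_eq 0 (hlin.const_add s) (by simp)
  have hminus : HasDerivAt (fun x => F (s - r * x / 2)) (deriv F s * -(r / 2)) 0 :=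
    hF'.comp_of_eq 0 (hlin.const_sub s) (by simp)
  have hslope := hasDerivAt_iff_tendsto_slope.mp (hplus.sub hminus)
  rw [show deriv F s * (r / 2) - deriv F s * -(r / 2) = deriv F s * r by ring] at hslope
  refine hslope.congr fun x => ?_
  simp [slope_def_field]

end HasLeadingTerm

theorem PExpr.hasLeadingTerm_of_evalE (e : PExpr) (he : e.goodAtoms) {p : Infinitesimal}
    (hev : e.evalE = some p) : HasLeadingTerm e.eval p := by
  induction e generalizing p with
  | const c =>
    cases hev
    exact HasLeadingTerm.const c
  | atom F s r =>
    cases hev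
    exact HasLeadingTerm.atom he r
  | add a b iha ihb =>
    simp only [PExpr.evalE, Option.bind_eq_bind, Option.bind_eq_some_iff, Option.pure_def,
      Option.some.injEq] at hev
    obtain ⟨pa, hpa, pb, hpb, rfl⟩ := hev
    exact (iha he.1 hpa).iadd (ihb he.2 hpb)
  | sub a b iha ihb =>
    simp only [PExpr.evalE, Option.bind_eq_bind, Option.bind_eq_some_iff, Option.pure_def,
      Option.some.injEq] at hev
    obtain ⟨pa, hpa, pb, hpb, rfl⟩ := hev
    exact (iha he.1 hpa).isub (ihb he.2 hpb)
  | mul a b iha ihb =>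
    simp only [PExpr.evalE, Option.bind_eq_bind, Option.bind_eq_some_iff, Option.pure_def,
      Option.some.injEq] at hev
    obtain ⟨pa, hpa, pb, hpb, rfl⟩ := hev
    exact (iha he.1 hpa).imul (ihb he.2 hpb)
  | div a b iha ihb =>
    simp only [PExpr.evalE, Option.bind_eq_bind, Option.bind_eq_some_iff] at hev
    obtain ⟨pa, hpa, pb, hpb, hp⟩ := hev
    exact (iha he.1 hpa).idiv (ihb he.2 hpb) hp

/-- **The limit theorem for probability expressions.** If every atom of `e` is
differentiable and the infinitesimal evaluation of `e` is defined and equals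
`ρ·ε^n`, then `⟦e⟧(x) / x^n → ρ` as `x → 0` within `{x ≠ 0}`. -/
theorem PExpr.tendsto_of_evalE (e : PExpr) (he : e.goodAtoms) (ρ : ℝ) (n : ℤ)
    (hev : e.evalE = some (ρ, n)) :
    Tendsto (fun x : ℝ => e.eval x / x ^ n) (𝓝[≠] (0 : ℝ)) (𝓝 ρ) :=
  e.hasLeadingTerm_of_evalE he hev
end

section
/- There exists a probability expression e, namely e = (a·a)/((a + a·a) − a) where a is the atom At(id, 0, 1) with id : ℝ → ℝ the identity function, such that the infinitesimal evaluation evalε(e) is undefined (a division by an infinitesimal with zero coefficient occurs), yet the real interpretation ⟦e⟧(x) tends to 1 as x tends to 0 within {x ≠ 0}. Hence the converse of the limit theorem for probability expressions fails. -/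
open Filter Topology

/-- **The converse of the limit theorem fails.** For
`e = (a·a) / ((a + a·a) − a)` with `a = At(id, 0, 1)`, the infinitesimal
evaluation is undefined (a division by an infinitesimal with zero coefficient
occurs), yet `⟦e⟧(x) → 1` as `x → 0` within `{x ≠ 0}`. -/
theorem PExpr.evalE_undefined_but_tendsto :
    ∃ e : PExpr,
      e = .div (.mul (.atom id 0 1) (.atom id 0 1))
            (.sub (.add (.atom id 0 1) (.mul (.atom id 0 1) (.atom id 0 1)))
              (.atom id 0 1)) ∧
      e.evalE = none ∧
      Filter.Tendsto (fun x : ℝ => e.eval x) (𝓝[≠] (0 : ℝ)) (𝓝 1) := by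
  refine ⟨_, rfl, ?_, ?_⟩
  · simp [PExpr.evalE, iadd, isub, imul, idiv, deriv_id]
  · have h : ∀ x : ℝ, x ≠ 0 →
        PExpr.eval (.div (.mul (.atom id 0 1) (.atom id 0 1))
          (.sub (.add (.atom id 0 1) (.mul (.atom id 0 1) (.atom id 0 1)))
            (.atom id 0 1))) x = 1 := by
      intro x hx
      simp only [PExpr.eval, id]
      field_simp
      rw [div_eq_one_iff_eq (by intro h; apply hx; linarith)]; ring
    refine Tendsto.congr' ?_ tendsto_const_nhds
    filter_upwards [self_mem_nhdsWithin] with x hx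
    exact (h x hx).symm
end

section
/- Let μ be a probability measure on ℝ × ℝ whose second marginal μ.map Prod.snd has no atoms, let β be the Bernoulli(1/2) probability measure on Bool, let ν = μ.prod β on (ℝ × ℝ) × Bool, let c ∈ ℝ, and let E = {p : (ℝ × ℝ) × Bool | p.2 = true → p.1.2 = c}. Then for every measurable set A ⊆ ℝ × ℝ, ν((A ×ˢ univ) ∩ E) = (1/2) · μ(A). Consequently the conditional probability ν((A ×ˢ univ) | E) = ν((A ×ˢ univ) ∩ E)/ν(E) equals μ(A): conditioning on E leaves the distribution of the pair (h, h') unchanged, so the observe statement executed in the measure-zero branch has no effect on the posterior. -/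
open MeasureTheory Set

lemma bern_half : ∀ b : Bool,
    ((PMF.bernoulli (1 / 2) (by norm_num)).toMeasure) {b} = 1 / 2 := by
  intro b
  rw [PMF.toMeasure_apply_singleton _ _ (measurableSet_singleton b)]
  cases b <;> simp [PMF.bernoulli]

lemma key (μ : Measure (ℝ × ℝ)) [IsProbabilityMeasure μ]
    (hμ : NoAtoms (μ.map Prod.snd)) (c : ℝ) (A : Set (ℝ × ℝ))
    (hA : MeasurableSet A) :
    (μ.prod ((PMF.bernoulli (1 / 2) (by norm_num)).toMeasure))
      ((A ×ˢ (univ : Set Bool)) ∩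
        {p : (ℝ × ℝ) × Bool | p.2 = true → p.1.2 = c}) = (1 / 2) * μ A := by
  have hset : (A ×ˢ (univ : Set Bool)) ∩
      {p : (ℝ × ℝ) × Bool | p.2 = true → p.1.2 = c}
      = (A ∩ {x : ℝ × ℝ | x.2 = c}) ×ˢ ({true} : Set Bool) ∪ A ×ˢ ({false} : Set Bool) := by
    ext ⟨x, b⟩
    cases b <;> simp [Set.mem_prod]
  have hc : μ {x : ℝ × ℝ | x.2 = c} = 0 := by
    have : μ {x : ℝ × ℝ | x.2 = c} = (μ.map Prod.snd) {c} := by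
      rw [Measure.map_apply measurable_snd (measurableSet_singleton c)]
      rfl
    rw [this]
    exact @measure_singleton _ _ _ hμ c
  have h0 : μ (A ∩ {x : ℝ × ℝ | x.2 = c}) = 0 :=
    measure_mono_null inter_subset_right hc
  rw [hset, measure_union, Measure.prod_prod, Measure.prod_prod, h0, bern_half, bern_half]
  · ring
  · exact Set.disjoint_of_subset (Set.prod_mono inter_subset_left subset_rfl) subset_rfl
      (Set.disjoint_prod.2 (Or.inr (by simp)))
  · exact hA.prod (measurableSet_singleton false)

/-- Conditioning on the event `E = (b = true → h' = c)` leaves the distribution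
of the pair `(h, h')` unchanged when the marginal of `h'` has no atoms: for
every measurable `A`, `ν((A ×ˢ univ) ∩ E) = (1/2) · μ(A)`, and consequently the
conditional probability `ν((A ×ˢ univ) ∩ E) / ν(E)` equals `μ(A)`. -/
theorem conditional_observe_no_effect (μ : Measure (ℝ × ℝ))
    [IsProbabilityMeasure μ] (hμ : NoAtoms (μ.map Prod.snd)) (c : ℝ) :
    ∀ A : Set (ℝ × ℝ), MeasurableSet A →
      (μ.prod ((PMF.bernoulli (1 / 2) (by norm_num)).toMeasure))
          ((A ×ˢ (univ : Set Bool)) ∩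
            {p : (ℝ × ℝ) × Bool | p.2 = true → p.1.2 = c}) = (1 / 2) * μ A ∧
      (μ.prod ((PMF.bernoulli (1 / 2) (by norm_num)).toMeasure))
          ((A ×ˢ (univ : Set Bool)) ∩
            {p : (ℝ × ℝ) × Bool | p.2 = true → p.1.2 = c}) /
        (μ.prod ((PMF.bernoulli (1 / 2) (by norm_num)).toMeasure))
          {p : (ℝ × ℝ) × Bool | p.2 = true → p.1.2 = c} = μ A := by
  intro A hA
  have h1 := key μ hμ c A hA
  have hE := key μ hμ c univ MeasurableSet.univ
  simp only [Set.univ_prod_univ, Set.univ_inter] at hE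
  refine ⟨h1, ?_⟩
  rw [h1, hE]
  simp [measure_univ]
  rw [mul_comm, mul_div_assoc, ENNReal.div_self (by norm_num) (by norm_num), mul_one]
end

section
/- Let (w₁, v₁), …, (w_N, v_N) be a nonempty finite list of pairs of real numbers with ∑ᵢ wᵢ ≠ 0, and let m ∈ ℤ. In infinitesimal arithmetic, form the weights Wᵢ = wᵢε^m and values Vᵢ = vᵢε^0, and compute the weighted average (via left folds of infinitesimal addition) as (∑ᵢ Wᵢ·Vᵢ)/(∑ᵢ Wᵢ). Then this weighted average is defined and equals ((∑ᵢ wᵢvᵢ)/(∑ᵢ wᵢ))·ε^0; in particular the infinitesimal factors cancel and the result is independent of m. -/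
open Filter Topology

lemma foldl_iadd_same_exp (m : ℤ) (l : List ℝ) : ∀ a : ℝ,
    List.foldl iadd (a, m) (l.map fun r => ((r, m) : Infinitesimal)) = (a + l.sum, m) := by
  induction l with
  | nil => intro a; simp
  | cons r t ih =>
      intro a
      simp only [List.map_cons, List.foldl_cons, List.sum_cons, iadd, if_pos rfl, if_true]
      rw [ih]
      ring_nf

/-- **Importance sampling with infinitesimal probabilities.** For a nonempty
list of (weight, value) pairs whose weights sum to a nonzero real, forming the
infinitesimal weights `wᵢ·ε^m` and values `vᵢ·ε^0` and computing the weighted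
average `(∑ᵢ Wᵢ·Vᵢ) / (∑ᵢ Wᵢ)` by left folds of infinitesimal addition, the
result is defined and equals `((∑ᵢ wᵢvᵢ) / (∑ᵢ wᵢ))·ε^0`: the infinitesimal
factors cancel, independently of `m`. -/
theorem infinitesimal_weighted_average (p : ℝ × ℝ) (l : List (ℝ × ℝ)) (m : ℤ)
    (hw : (((p :: l).map Prod.fst).sum) ≠ 0) :
    idiv
      (List.foldl iadd (imul (p.1, m) (p.2, 0))
        (l.map fun q => imul (q.1, m) (q.2, 0)))
      (List.foldl iadd (p.1, m) (l.map fun q => ((q.1, m) : Infinitesimal))) =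
      some ((((p :: l).map fun q => q.1 * q.2).sum) / (((p :: l).map Prod.fst).sum), 0) := by
  have h1 : (l.map fun q => imul ((q.1, m) : Infinitesimal) (q.2, 0)) =
      (l.map fun q => q.1 * q.2).map fun r => ((r, m) : Infinitesimal) := by
    simp [imul]
  have h2 : (l.map fun q => ((q.1, m) : Infinitesimal)) =
      (l.map Prod.fst).map fun r => ((r, m) : Infinitesimal) := by
    simp
  have hm : imul ((p.1, m) : Infinitesimal) (p.2, 0) = (p.1 * p.2, m) := by
    simp [imul]
  rw [h1, h2, hm, foldl_iadd_same_exp, foldl_iadd_same_exp, idiv]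
  simp only [List.map_cons, List.sum_cons] at hw ⊢
  rw [if_neg hw]
  simp
end

section
/- Let (w₁, n₁), …, (w_N, n_N) be a nonempty finite list of infinitesimal numbers wᵢε^{nᵢ}, and let n_min = min {n₁, …, n_N}. Then the left fold of infinitesimal addition over this list equals (∑_{i : nᵢ = n_min} wᵢ)·ε^{n_min}: only the terms whose exponent is minimal contribute to the sum, even when intermediate coefficient sums vanish. -/
open Filter Topology

private lemma foldl_min_le (l : List ℤ) : ∀ a : ℤ, List.foldl min a l ≤ a := by
  induction l with
  | nil => simp
  | cons x t ih => intro a; exact le_trans (ih _) (min_le_left _ _)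

/-- **Minimal-exponent terms dominate infinitesimal sums.** The left fold of
infinitesimal addition over a nonempty list of infinitesimals `wᵢ·ε^{nᵢ}`
equals `(∑_{i : nᵢ = n_min} wᵢ)·ε^{n_min}`, where `n_min` is the minimum of the
exponents: only terms with minimal exponent contribute, even when intermediate
coefficient sums vanish. -/
theorem infinitesimal_foldl_add (p : Infinitesimal) (l : List Infinitesimal) :
    List.foldl iadd p l =
      (((((p :: l).filter fun q => q.2 = List.foldl min p.2 (l.map Prod.snd)).map
          Prod.fst)).sum,
        List.foldl min p.2 (l.map Prod.snd)) := by
  induction l generalizing p with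
  | nil => simp
  | cons x t ih =>
    have h2 : (iadd p x).2 = min p.2 x.2 := by
      unfold iadd; split_ifs <;> simp <;> omega
    simp only [List.foldl_cons, List.map_cons]
    rw [ih (iadd p x), h2]
    have hle : List.foldl min (min p.2 x.2) (t.map Prod.snd) ≤ min p.2 x.2 :=
      foldl_min_le _ _
    obtain ⟨m, hmm⟩ : ∃ m, List.foldl min (min p.2 x.2) (t.map Prod.snd) = m := ⟨_, rfl⟩
    rw [hmm] at hle
    simp only [hmm]
    have hlp : m ≤ p.2 := le_trans hle (min_le_left _ _)
    have hlx : m ≤ x.2 := le_trans hle (min_le_right _ _)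
    refine Prod.ext ?_ rfl
    by_cases hpm : p.2 = m <;> by_cases hxm : x.2 = m
    · have hpx : p.2 = x.2 := by omega
      have hi : iadd p x = (p.1 + x.1, p.2) := by simp [iadd, hpx]
      simp [List.filter_cons, hi, hpm, hxm]
      ring
    · have hi : iadd p x = p := by
        unfold iadd; rw [if_neg (by omega), if_pos (by omega)]
      simp [List.filter_cons, hi, hpm, hxm]
    · have hi : iadd p x = x := by
        unfold iadd; rw [if_neg (by omega), if_neg (by omega)]
      simp [List.filter_cons, hi, hpm, hxm]
    · have hi : (iadd p x).2 ≠ m := by rw [h2]; omega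
      simp [List.filter_cons, hi, hpm, hxm]
end
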